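/- arXiv:0812.0214 — 2 statements merged into one kernel-verified Lean document; each statement's English description precedes it below -/
import Mathlib

section
/- For every partition I = A₁ ∪ … ∪ A_k of I into finitely many pairwise disjoint Lebesgue measurable sets, there are a partition I = I₁ ∪ … ∪ I_k into intervals and ψ ∈ Φ₀ such that μ(ψ(A_i) Δ I_i) = 0 for each i ∈ [k]. -/
open MeasureTheory Set
open scoped symmDiff

noncomputable section

/-- The unit interval `[0,1]` with Lebesgue measure. -/
abbrev I01 : Type := unitInterval

/-- A graphon: a bounded symmetric Lebesgue(=a.e.)-measurable function on `I² `. -/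
def IsGraphon (W : I01 × I01 → ℝ) : Prop :=
  (∀ x y : I01, W (x, y) = W (y, x)) ∧ (∃ C : ℝ, ∀ p, |W p| ≤ C) ∧ AEMeasurable W volume

/-- The cut norm of `W`. -/
def cutNorm (W : I01 × I01 → ℝ) : ℝ :=
  sSup { r : ℝ | ∃ S T : Set I01, NullMeasurableSet S volume ∧ NullMeasurableSet T volume ∧
    r = |∫ p in S ×ˢ T, W p| }

/-- The `L¹` norm of `W`. -/
def l1Norm (W : I01 × I01 → ℝ) : ℝ := ∫ p, |W p|

/-- Lebesgue-measurable measure preserving self-maps of `[0,1]` (the class `Φ`). -/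
def MPhi (φ : I01 → I01) : Prop :=
  AEMeasurable φ volume ∧
    ∀ A : Set I01, NullMeasurableSet A volume → volume (φ ⁻¹' A) = volume A

/-- Invertible measure preserving maps (the class `Φ₀`). -/
def MPhi0 (φ : I01 → I01) : Prop :=
  Function.Bijective φ ∧ MPhi φ ∧ MPhi (Function.invFun φ)

/-- `W^φ (x,y) = W (φ x, φ y)`. -/
def compMap (W : I01 × I01 → ℝ) (φ : I01 → I01) : I01 × I01 → ℝ :=
  fun p => W (φ p.1, φ p.2)

/-- The distance `δ₁` on graphons. -/
def gDelta1 (U W : I01 × I01 → ℝ) : ℝ :=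
  sInf { r : ℝ | ∃ φ : I01 → I01, MPhi0 φ ∧ r = l1Norm (fun p => U p - compMap W φ p) }

/-- The cut distance `δ_□` on graphons. -/
def gDeltaBox (U W : I01 × I01 → ℝ) : ℝ :=
  sInf { r : ℝ | ∃ φ : I01 → I01, MPhi0 φ ∧ r = cutNorm (fun p => U p - compMap W φ p) }

open Classical in
/-- The homomorphism density `t(F,W)` of a graph `F` on `[k]` in `W`. -/
def homDensity {k : ℕ} (F : SimpleGraph (Fin k)) (W : I01 × I01 → ℝ) : ℝ :=
  ∫ x : Fin k → I01,
    ∏ e ∈ Finset.univ.filter (fun e : Fin k × Fin k => e.1 < e.2 ∧ F.Adj e.1 e.2),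
      W (x e.1, x e.2)

open Classical in
/-- The real-valued adjacency indicator of a graph. -/
def adjInd {V : Type*} (G : SimpleGraph V) (i j : V) : ℝ := if G.Adj i j then 1 else 0

/-- Overlay matrices: nonnegative with row sums `1/m` and column sums `1/n`. -/
def IsOverlay (m n : ℕ) (A : Matrix (Fin m) (Fin n) ℝ) : Prop :=
  (∀ i j, 0 ≤ A i j) ∧ (∀ i, ∑ j, A i j = 1 / (m : ℝ)) ∧ (∀ j, ∑ i, A i j = 1 / (n : ℝ))

/-- The fractional distance `δ₁` between two graphs. -/
def graphDelta1 {m n : ℕ} (G : SimpleGraph (Fin m)) (H : SimpleGraph (Fin n)) : ℝ :=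
  sInf { r : ℝ | ∃ A : Matrix (Fin m) (Fin n) ℝ, IsOverlay m n A ∧
    r = ∑ i, ∑ j, ∑ g, ∑ h, A i g * A j h * |adjInd G i j - adjInd H g h| }

/-- The edit distance `δ̂₁` between two graphs on `[n]`. -/
def editDist {n : ℕ} (G H : SimpleGraph (Fin n)) : ℝ :=
  (2 / (n : ℝ) ^ 2) *
    sInf { r : ℝ | ∃ σ : Fin n ≃ Fin n,
      r = (∑ i, ∑ j, |adjInd G (σ i) (σ j) - adjInd H i j|) / 2 }

open Classical in
/-- The step graphon `W_G` associated with a graph `G` on `[n]`. -/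
def stepGraphon {n : ℕ} (G : SimpleGraph (Fin n)) : I01 × I01 → ℝ :=
  fun p => if ∃ k l : Fin n, G.Adj k l ∧
      ((k : ℕ) : ℝ) / n ≤ (p.1 : ℝ) ∧ (p.1 : ℝ) < ((k : ℕ) + 1 : ℝ) / n ∧
      ((l : ℕ) : ℝ) / n ≤ (p.2 : ℝ) ∧ (p.2 : ℝ) < ((l : ℕ) + 1 : ℝ) / n
    then 1 else 0

open ProbabilityTheory Filter Function
open scoped ENNReal Cardinal

/-!
Choose a measurable labelling `ℓ` with `x ∈ A (ℓ x)` for almost every `x`, and place the piece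
labelled `i` in `[2i, 2i + 1]` by `σ x = 2 ℓ(x) + x`. The image `ν` of Lebesgue measure under `σ`
has no atoms, so its distribution function `F` is continuous and pushes `ν` forward to Lebesgue
measure (probability integral transform); moreover `F` is injective off a `ν`-null set. Hence
`F ∘ σ` is measure preserving, injective off a null set, and sorts the pieces by label: the piece
labelled `i` goes into `[F(2i - 1), F(2i + 1)]`. Redefining `F ∘ σ` on a null set, via a bijection
between two null sets that both contain a copy of the Cantor set, gives `ψ ∈ Φ₀`. Then `ψ(A i)`
lies almost everywhere in the `i`-th interval, and as both families partition `[0,1]` they agree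
up to null sets.
-/

lemma volume_preCantorSet_le (n : ℕ) : volume (preCantorSet n) ≤ (2 / 3 : ℝ≥0∞) ^ n := by
  induction n with
  | zero => simp [Real.volume_Icc]
  | succ n ih =>
    have h₀ : (· / 3 : ℝ → ℝ) = AffineMap.homothety 0 (1 / 3 : ℝ) := by
      ext x
      simp only [AffineMap.homothety_apply, vsub_eq_sub, smul_eq_mul, vadd_eq_add]
      ring
    have h₁ : (fun x : ℝ ↦ (2 + x) / 3) = AffineMap.homothety 1 (1 / 3 : ℝ) := by
      ext x
      simp only [AffineMap.homothety_apply, vsub_eq_sub, smul_eq_mul, vadd_eq_add]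
      ring
    have hthird : ENNReal.ofReal |(1 / 3 : ℝ) ^ Module.finrank ℝ ℝ| = 1 / 3 := by
      norm_num [ENNReal.ofReal_div_of_pos]
    calc volume (preCantorSet (n + 1))
        ≤ 1 / 3 * volume (preCantorSet n) + 1 / 3 * volume (preCantorSet n) := by
          rw [preCantorSet_succ, h₀, h₁]
          refine (measure_union_le _ _).trans_eq ?_
          rw [Measure.addHaar_image_homothety, Measure.addHaar_image_homothety, hthird]
      _ ≤ 1 / 3 * (2 / 3) ^ n + 1 / 3 * (2 / 3) ^ n := by gcongr
      _ = (2 / 3) ^ (n + 1) := by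
          simp only [ENNReal.div_eq_inv_mul]; ring

lemma volume_cantorSet : volume cantorSet = 0 := by
  refine le_antisymm (ge_of_tendsto' (ENNReal.tendsto_pow_atTop_nhds_zero_of_lt_one ?_)
    fun n ↦ (measure_mono (iInter_subset _ n)).trans (volume_preCantorSet_le n)) zero_le
  exact ENNReal.div_lt_of_lt_mul (by norm_num)

lemma mk_cantorSet : #cantorSet = 𝔠 := by
  rw [Cardinal.mk_congr cantorSetEquivNatToBool]
  simp

section Cdf

variable {ν : Measure ℝ} [IsProbabilityMeasure ν]

lemma continuous_cdf [NullSingletonClass ν] : Continuous (cdf ν) := by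
  refine continuous_iff_continuousAt.2 fun x ↦ ?_
  rw [(monotone_cdf ν).continuousAt_iff_leftLim_eq_rightLim, StieltjesFunction.rightLim_eq]
  have h := (cdf ν).measure_singleton x
  rw [measure_cdf, measure_singleton, eq_comm, ENNReal.ofReal_eq_zero, sub_nonpos] at h
  exact le_antisymm ((monotone_cdf ν).leftLim_le le_rfl) h

lemma measure_cdf_le [NullSingletonClass ν] {u : ℝ} (hu₀ : 0 ≤ u) (hu₁ : u ≤ 1) :
    ν {x | cdf ν x ≤ u} = ENNReal.ofReal u := by
  set S := {x | cdf ν x ≤ u}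
  rcases S.eq_empty_or_nonempty with hS | hS
  · obtain rfl : u = 0 := by
      refine le_antisymm (not_lt.1 fun hu ↦ ?_) hu₀
      obtain ⟨x, hx⟩ := ((tendsto_cdf_atBot ν).eventually (gt_mem_nhds hu)).exists
      exact eq_empty_iff_forall_notMem.1 hS x hx.le
    simp [hS]
  by_cases hbdd : BddAbove S
  · have hs : sSup S ∈ S := (isClosed_le continuous_cdf continuous_const).csSup_mem hS hbdd
    have hSs : S = Iic (sSup S) := Subset.antisymm (fun x hx ↦ le_csSup hbdd hx)
      fun x hx ↦ ((monotone_cdf ν) hx).trans hs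
    have hcdf : cdf ν (sSup S) = u := by
      refine le_antisymm hs (not_lt.1 fun hlt ↦ ?_)
      obtain ⟨y, hsy, hy⟩ :=
        (continuous_cdf.continuousAt.eventually_lt continuousAt_const hlt).exists_gt
      exact absurd hsy (not_lt.2 (le_csSup hbdd hy.le))
    rw [hSs, ← ofReal_cdf, hcdf]
  · have hSu : S = univ := eq_univ_of_forall fun x ↦ by
      obtain ⟨y, hy, hxy⟩ := not_bddAbove_iff.1 hbdd x
      exact ((monotone_cdf ν) hxy.le).trans hy
    obtain rfl : u = 1 := le_antisymm hu₁ <|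
      le_of_tendsto' (tendsto_cdf_atTop ν) fun x ↦ (hSu ▸ mem_univ x : x ∈ S)
    simp [hSu]

variable (ν) in
def cdfUnit (x : ℝ) : I01 := ⟨cdf ν x, cdf_nonneg ν x, cdf_le_one ν x⟩

omit [IsProbabilityMeasure ν] in
lemma monotone_cdfUnit : Monotone (cdfUnit ν) := fun _ _ h ↦ monotone_cdf ν h

omit [IsProbabilityMeasure ν] in
lemma measurable_cdfUnit : Measurable (cdfUnit ν) := monotone_cdfUnit.measurable

lemma map_cdfUnit [NullSingletonClass ν] : ν.map (cdfUnit ν) = volume := by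
  refine Measure.ext_of_Iic _ _ fun u ↦ ?_
  rw [Measure.map_apply measurable_cdfUnit measurableSet_Iic, unitInterval.volume_Iic]
  exact measure_cdf_le u.2.1 u.2.2

lemma exists_null_injOn_cdfUnit [NullSingletonClass ν] :
    ∃ N, MeasurableSet N ∧ ν N = 0 ∧ InjOn (cdfUnit ν) Nᶜ := by
  set N := ⋃ q : ℚ, cdfUnit ν ⁻¹' {cdfUnit ν q}
  -- A plateau of the cdf contains a rational, so it lies in the fibre through that rational.
  have hplateau : ∀ {a b}, a < b → cdfUnit ν a = cdfUnit ν b → b ∈ N := fun {a b} hab h ↦ by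
    obtain ⟨q, haq, hqb⟩ := exists_rat_btwn hab
    exact mem_iUnion.2 ⟨q, le_antisymm (h ▸ monotone_cdfUnit haq.le) (monotone_cdfUnit hqb.le)⟩
  refine ⟨N, .iUnion fun q ↦ measurable_cdfUnit (measurableSet_singleton _),
    measure_iUnion_null fun q ↦ ?_, fun x hx y hy hxy ↦ ?_⟩
  · rw [← Measure.map_apply measurable_cdfUnit (measurableSet_singleton _), map_cdfUnit,
      measure_singleton]
  rcases lt_trichotomy x y with hlt | rfl | hgt
  · exact absurd (hplateau hlt hxy) hy
  · rfl
  · exact absurd (hplateau hgt hxy.symm) hx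

end Cdf

lemma exists_measurable_ae_mem {α ι : Type*} [MeasurableSpace α] {μ : Measure α} [Countable ι]
    [MeasurableSpace ι] [MeasurableSpace.CountablyGenerated ι] {A : ι → Set α}
    (hA : ∀ i, NullMeasurableSet (A i) μ) (hdisj : Pairwise (Disjoint on A))
    (hcover : ⋃ i, A i = univ) :
    ∃ ℓ : α → ι, Measurable ℓ ∧ ∀ᵐ x ∂μ, x ∈ A (ℓ x) := by
  choose ℓ₀ hℓ₀ using fun x ↦ mem_iUnion.1 (hcover ▸ mem_univ x)
  have hpre : ∀ s, ℓ₀ ⁻¹' s = ⋃ i ∈ s, A i := fun s ↦ by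
    ext x
    simp only [mem_preimage, mem_iUnion, exists_prop]
    refine ⟨fun hx ↦ ⟨_, hx, hℓ₀ x⟩, fun ⟨i, hi, hx⟩ ↦ ?_⟩
    rwa [hdisj.eq (not_disjoint_iff.2 ⟨x, hℓ₀ x, hx⟩)]
  have hℓ₀m : AEMeasurable ℓ₀ μ := NullMeasurable.aemeasurable fun s _ ↦ by
    rw [hpre]
    exact .biUnion (to_countable s) fun i _ ↦ hA i
  exact ⟨hℓ₀m.mk, hℓ₀m.measurable_mk, hℓ₀m.ae_eq_mk.mono fun x hx ↦ hx ▸ hℓ₀ x⟩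

lemma ae_eq_of_forall_ae_le {α ι : Type*} [MeasurableSpace α] {μ : Measure α} [Countable ι]
    {X Y : ι → Set α} (hX : ⋃ i, X i = univ) (hY : Pairwise (Disjoint on Y))
    (h : ∀ i, X i ≤ᵐ[μ] Y i) (i : ι) : X i =ᵐ[μ] Y i := by
  refine (h i).antisymm ?_
  filter_upwards [ae_all_iff.2 h] with x hx hxi
  obtain ⟨j, hj⟩ := mem_iUnion.1 (hX ▸ mem_univ x : x ∈ ⋃ j, X j)
  rwa [hY.eq (not_disjoint_iff.2 ⟨x, hxi, hx j hj⟩)]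

lemma exists_equiv_eqOn_mapsTo_compl {α : Type*} {f : α → α} {G : Set α} (hinj : InjOn f G)
    (hmk : #↥Gᶜ = #↥(f '' G)ᶜ) : ∃ e : α ≃ α, EqOn e f G ∧ MapsTo e Gᶜ (f '' G)ᶜ := by
  classical
  obtain ⟨e'⟩ := Cardinal.eq.1 hmk
  refine ⟨(Equiv.sumCompl (· ∈ G)).symm.trans <|
    ((Equiv.Set.imageOfInjOn f G hinj).sumCongr e').trans (Equiv.sumCompl (· ∈ f '' G)),
    fun x hx ↦ ?_, fun x hx ↦ ?_⟩
  · simp only [Equiv.trans_apply, Equiv.sumCompl_symm_apply_of_pos hx, Equiv.sumCongr_apply,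
      Sum.map_inl]
    rfl
  · simp only [Equiv.trans_apply, Equiv.sumCompl_symm_apply_of_neg hx, Equiv.sumCongr_apply,
      Sum.map_inr]
    exact (e' ⟨x, hx⟩).prop

theorem exists_equiv_ae_eq_of_injOn {α : Type*} [MeasurableSpace α] [StandardBorelSpace α]
    {μ : Measure α} {f : α → α} (hf : MeasurePreserving f μ μ) {N : Set α} (hN : MeasurableSet N)
    (hNμ : μ N = 0) (hinj : InjOn f Nᶜ) {C : Set α} (hC : MeasurableSet C) (hCμ : μ C = 0)
    (hCα : #C = #α) :
    ∃ e : α ≃ α, e =ᵐ[μ] f ∧ AEMeasurable e.symm μ := by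
  -- Removing `C ∪ f ⁻¹' C` as well makes both exceptional sets as large as `α`.
  set G := (N ∪ C ∪ f ⁻¹' C)ᶜ with hG
  have hGm : MeasurableSet G := ((hN.union hC).union (hf.measurable hC)).compl
  have hGc : μ Gᶜ = 0 := by
    rw [compl_compl]
    exact measure_union_null (measure_union_null hNμ hCμ)
      ((hf.measure_preimage hC.nullMeasurableSet).trans hCμ)
  have hinjG : InjOn f G := hinj.mono fun x hx hxN ↦ hx (Or.inl (Or.inl hxN))
  have hfGm : MeasurableSet (f '' G) := hGm.image_of_measurable_injOn hf.measurable hinjG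
  have hfGc : μ (f '' G)ᶜ = 0 := by
    rw [← hf.measure_preimage hfGm.compl.nullMeasurableSet]
    exact measure_mono_null (fun x hx hxG ↦ hx (mem_image_of_mem f hxG)) hGc
  have hCG : C ⊆ Gᶜ := fun x hx ↦ by simp [hG, hx]
  have hCfG : C ⊆ (f '' G)ᶜ := by
    rintro _ hy ⟨x, hxG, rfl⟩
    exact hxG (Or.inr hy)
  obtain ⟨e, hef, heG⟩ := exists_equiv_eqOn_mapsTo_compl hinjG <|
    (le_antisymm (Cardinal.mk_set_le _) (hCα ▸ Cardinal.mk_le_mk_of_subset hCG)).trans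
      (le_antisymm (Cardinal.mk_set_le _) (hCα ▸ Cardinal.mk_le_mk_of_subset hCfG)).symm
  refine ⟨e, measure_mono_null (fun x hx hxG ↦ hx (hef hxG)) hGc,
    NullMeasurable.aemeasurable fun A hA ↦ ?_⟩
  have hsplit : e.symm ⁻¹' A = f '' (A ∩ G) ∪ e '' (A \ G) := by
    rw [← Equiv.image_eq_preimage_symm, ← image_congr fun x hx ↦ hef hx.2, ← image_union,
      inter_union_sdiff]
  rw [hsplit]
  exact (hA.inter hGm |>.image_of_measurable_injOn hf.measurable
    (hinjG.mono inter_subset_right)).nullMeasurableSet.union <|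
      .of_null <| measure_mono_null ((image_mono fun x hx ↦ hx.2).trans heG.image_subset) hfGc

lemma mPhi_of_map_eq {φ : I01 → I01} (hφ : AEMeasurable φ volume) (h : volume.map φ = volume) :
    MPhi φ :=
  ⟨hφ, fun A hA ↦ by rw [← Measure.map_apply₀ hφ (h.symm ▸ hA), h]⟩

lemma mPhi0_of_equiv (e : I01 ≃ I01) (he : AEMeasurable e volume)
    (he' : AEMeasurable e.symm volume) (h : volume.map e = volume) : MPhi0 e := by
  have hinv : Function.invFun e = e.symm := funext fun y ↦ e.injective <| by
    rw [Function.invFun_eq (e.surjective y), e.apply_symm_apply]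
  refine ⟨e.bijective, mPhi_of_map_eq he h, hinv ▸ mPhi_of_map_eq he' ?_⟩
  calc volume.map e.symm = (volume.map e).map e.symm := by rw [h]
    _ = volume := by
      rw [AEMeasurable.map_map_of_aemeasurable (h.symm ▸ he') he, e.symm_comp_self,
        Measure.map_id]

lemma exists_mPhi0_ae_eq {f : I01 → I01} (hf : MeasurePreserving f volume volume) {N : Set I01}
    (hN : MeasurableSet N) (hNμ : volume N = 0) (hinj : InjOn f Nᶜ) :
    ∃ ψ, MPhi0 ψ ∧ ψ =ᵐ[volume] f := by
  have hCm : MeasurableSet (Subtype.val ⁻¹' cantorSet : Set I01) :=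
    measurable_subtype_coe isClosed_cantorSet.measurableSet
  have hCμ : volume (Subtype.val ⁻¹' cantorSet : Set I01) = 0 := by
    rw [unitInterval.volume_apply]
    exact measure_mono_null (image_preimage_subset _ _) volume_cantorSet
  have hCα : #(Subtype.val ⁻¹' cantorSet : Set I01) = #I01 := by
    rw [Cardinal.mk_preimage_of_injective_of_subset_range _ _ Subtype.val_injective
      (by rw [Subtype.range_coe]; exact cantorSet_subset_unitInterval), mk_cantorSet,
      Cardinal.mk_Icc_real zero_lt_one]
  obtain ⟨e, hef, he'⟩ := exists_equiv_ae_eq_of_injOn hf hN hNμ hinj hCm hCμ hCα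
  refine ⟨e, mPhi0_of_equiv e (hf.measurable.aemeasurable.congr hef.symm) he' ?_, hef⟩
  rw [Measure.map_congr hef, hf.map_eq]

lemma MPhi0.image_ae_le {ψ : I01 → I01} (hψ : MPhi0 ψ) {A B : Set I01}
    (h : ∀ᵐ x, x ∈ A → ψ x ∈ B) : ψ '' A ≤ᵐ[volume] B := by
  rw [ae_iff] at h
  rw [ae_le_set]
  refine measure_mono_null ?_ ((hψ.2.2.2 _ (.of_null h)).trans h)
  rintro _ ⟨⟨x, hxA, rfl⟩, hxB⟩
  simp only [mem_preimage, mem_ofPred_eq, Function.leftInverse_invFun hψ.1.1 x]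
  exact fun hx ↦ hxB (hx hxA)

section IntervalPiece

variable {k : ℕ} (c : Fin k → ℝ)

def intervalPiece (i : Fin k) : Set ℝ := Ici (c i) ∩ ⋂ j > i, Iio (c j)

lemma ordConnected_intervalPiece (i : Fin k) : (intervalPiece c i).OrdConnected :=
  ordConnected_Ici.inter <| ordConnected_iInter fun _ ↦ ordConnected_iInter fun _ ↦
    ordConnected_Iio

lemma pairwise_disjoint_intervalPiece : Pairwise (Disjoint on intervalPiece c) :=
  (pairwise_disjoint_on _).2 fun _ j hij ↦ disjoint_left.2 fun _ hi hj ↦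
    (mem_iInter₂.1 hi.2 j hij).not_ge (mem_Ici.1 hj.1)

lemma iUnion_intervalPiece : ⋃ i, intervalPiece c i = ⋃ i, Ici (c i) := by
  refine Subset.antisymm (iUnion_mono fun i ↦ inter_subset_left) fun x hx ↦ ?_
  obtain ⟨j, hj⟩ := mem_iUnion.1 hx
  set s := Finset.univ.filter fun j ↦ c j ≤ x
  have hs : s.Nonempty := ⟨j, Finset.mem_filter.2 ⟨Finset.mem_univ _, hj⟩⟩
  refine mem_iUnion.2 ⟨s.max' hs, (Finset.mem_filter.1 (s.max'_mem hs)).2,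
    mem_iInter₂.2 fun j' hj' ↦ mem_Iio.2 <| not_le.1 fun h ↦ ?_⟩
  exact (s.le_max' j' (Finset.mem_filter.2 ⟨Finset.mem_univ _, h⟩)).not_gt hj'

end IntervalPiece

section Rearrangement

variable {k : ℕ} {ℓ : I01 → Fin k}

variable (ℓ) in
def stackPieces (x : I01) : ℝ := 2 * ((ℓ x : ℕ) : ℝ) + x

lemma two_mul_le_stackPieces (x : I01) : 2 * ((ℓ x : ℕ) : ℝ) ≤ stackPieces ℓ x :=
  le_add_of_nonneg_right x.2.1

lemma stackPieces_le (x : I01) : stackPieces ℓ x ≤ 2 * ((ℓ x : ℕ) : ℝ) + 1 :=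
  add_le_add_right x.2.2 _

lemma two_mul_add_one_le_two_mul_sub_one {i j : Fin k} (h : i < j) :
    2 * ((i : ℕ) : ℝ) + 1 ≤ 2 * ((j : ℕ) : ℝ) - 1 := by
  have : ((i : ℕ) : ℝ) + 1 ≤ (j : ℕ) := by exact_mod_cast h
  linarith

lemma stackPieces_injective : Injective (stackPieces ℓ) := by
  intro x y h
  have hlt : ∀ {x y}, ℓ x < ℓ y → stackPieces ℓ x < stackPieces ℓ y := fun {x y} hxy ↦ by
    linarith [stackPieces_le (ℓ := ℓ) x, two_mul_le_stackPieces (ℓ := ℓ) y,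
      two_mul_add_one_le_two_mul_sub_one hxy]
  have hℓ : ℓ x = ℓ y := by
    by_contra hne
    rcases lt_or_gt_of_ne hne with hxy | hxy
    exacts [(hlt hxy).ne h, (hlt hxy).ne' h]
  simp only [stackPieces, hℓ, add_right_inj] at h
  exact Subtype.ext h

lemma measurable_stackPieces (hℓ : Measurable ℓ) : Measurable (stackPieces ℓ) := by
  unfold stackPieces; fun_prop

lemma isProbabilityMeasure_map_stackPieces (hℓ : Measurable ℓ) :
    IsProbabilityMeasure (volume.map (stackPieces ℓ)) :=
  Measure.isProbabilityMeasure_map (measurable_stackPieces hℓ).aemeasurable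

lemma nullSingletonClass_map_stackPieces (hℓ : Measurable ℓ) :
    NullSingletonClass (volume.map (stackPieces ℓ)) where
  measure_singleton t := by
    rw [Measure.map_apply (measurable_stackPieces hℓ) (measurableSet_singleton t)]
    exact (subsingleton_singleton.preimage stackPieces_injective).measure_zero _

variable (ℓ) in
def rearrange : I01 → I01 := cdfUnit (volume.map (stackPieces ℓ)) ∘ stackPieces ℓ

variable (ℓ) in
/-- `cutPoint ℓ i` is the measure of `{x | ℓ x < i}`. -/
def cutPoint (i : Fin k) : ℝ := cdf (volume.map (stackPieces ℓ)) (2 * (i : ℕ) - 1)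

lemma measurePreserving_rearrange (hℓ : Measurable ℓ) :
    MeasurePreserving (rearrange ℓ) volume volume := by
  have := isProbabilityMeasure_map_stackPieces hℓ
  have := nullSingletonClass_map_stackPieces hℓ
  refine ⟨measurable_cdfUnit.comp (measurable_stackPieces hℓ), ?_⟩
  rw [rearrange, ← Measure.map_map measurable_cdfUnit (measurable_stackPieces hℓ), map_cdfUnit]

lemma exists_null_injOn_rearrange (hℓ : Measurable ℓ) :
    ∃ N, MeasurableSet N ∧ volume N = 0 ∧ InjOn (rearrange ℓ) Nᶜ := by
  have := isProbabilityMeasure_map_stackPieces hℓ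
  have := nullSingletonClass_map_stackPieces hℓ
  obtain ⟨N, hN, hNμ, hinj⟩ := exists_null_injOn_cdfUnit (ν := volume.map (stackPieces ℓ))
  refine ⟨stackPieces ℓ ⁻¹' N, measurable_stackPieces hℓ hN, ?_,
    hinj.comp stackPieces_injective.injOn fun x hx ↦ hx⟩
  rwa [← Measure.map_apply (measurable_stackPieces hℓ) hN]

lemma cutPoint_eq_zero (hℓ : Measurable ℓ) {i : Fin k} (hi : (i : ℕ) = 0) : cutPoint ℓ i = 0 := by
  have := isProbabilityMeasure_map_stackPieces hℓ
  have hempty : stackPieces ℓ ⁻¹' Iic (-1) = ∅ := eq_empty_of_forall_notMem fun x hx ↦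
    absurd ((mul_nonneg zero_le_two (Nat.cast_nonneg _)).trans
      ((two_mul_le_stackPieces x).trans hx)) (by norm_num)
  refine le_antisymm ?_ (cdf_nonneg _ _)
  rw [← ENNReal.ofReal_eq_zero, cutPoint, ofReal_cdf, hi, Nat.cast_zero, mul_zero, zero_sub,
    Measure.map_apply (measurable_stackPieces hℓ) measurableSet_Iic, hempty, measure_empty]

lemma ae_rearrange_mem_intervalPiece (hℓ : Measurable ℓ) :
    ∀ᵐ x, (rearrange ℓ x : ℝ) ∈ intervalPiece (cutPoint ℓ) (ℓ x) := by
  set ν := volume.map (stackPieces ℓ)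
  have hnull : ∀ᵐ x, ∀ i : Fin k, rearrange ℓ x ≠ cdfUnit ν (2 * (i : ℕ) + 1) := by
    refine ae_all_iff.2 fun i ↦ ae_iff.2 ?_
    simp only [ne_eq, not_not]
    exact ((measurePreserving_rearrange hℓ).measure_preimage
      (measurableSet_singleton _).nullMeasurableSet).trans (measure_singleton _)
  filter_upwards [hnull] with x hx
  refine ⟨monotone_cdf ν ((sub_le_self _ zero_le_one).trans (two_mul_le_stackPieces x)),
    mem_iInter₂.2 fun j hj ↦ ?_⟩
  have hσ := monotone_cdf ν (stackPieces_le (ℓ := ℓ) x)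
  have hj := monotone_cdf ν (two_mul_add_one_le_two_mul_sub_one hj)
  -- equality would force `rearrange ℓ x` onto the excluded value `F (2 ℓ(x) + 1)`
  exact lt_of_le_of_ne (hσ.trans hj) fun heq ↦
    hx (ℓ x) (Subtype.ext (le_antisymm hσ (hj.trans heq.ge)))

end Rearrangement

/-- Any finite measurable partition of `[0,1]` can be mapped by some `ψ ∈ Φ₀` to a
partition into intervals, up to null sets. -/
theorem exists_mPhi0_to_intervals (k : ℕ) (A : Fin k → Set I01)
    (hAm : ∀ i, NullMeasurableSet (A i) volume)
    (hAdisj : ∀ i j, i ≠ j → Disjoint (A i) (A j))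
    (hAcover : (⋃ i, A i) = Set.univ) :
    ∃ (J : Fin k → Set I01) (ψ : I01 → I01),
      (∀ i, ((fun x : I01 => (x : ℝ)) '' J i).OrdConnected) ∧
      (∀ i j, i ≠ j → Disjoint (J i) (J j)) ∧
      (⋃ i, J i) = Set.univ ∧
      MPhi0 ψ ∧
      ∀ i, volume ((ψ '' A i) ∆ J i) = 0 := by
  have hAdisj : Pairwise (Disjoint on A) := hAdisj
  obtain ⟨ℓ, hℓ, hAℓ⟩ := exists_measurable_ae_mem hAm hAdisj hAcover
  obtain ⟨N, hN, hNμ, hinj⟩ := exists_null_injOn_rearrange hℓ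
  obtain ⟨ψ, hψ, hψf⟩ := exists_mPhi0_ae_eq (measurePreserving_rearrange hℓ) hN hNμ hinj
  set J : Fin k → Set I01 := fun i ↦ Subtype.val ⁻¹' intervalPiece (cutPoint ℓ) i
  have hJ : Pairwise (Disjoint on J) := fun i j hij ↦
    (pairwise_disjoint_intervalPiece _ hij).preimage _
  refine ⟨J, ψ, fun i ↦ ?_, hJ, ?_, hψ, fun i ↦ ?_⟩
  · rw [Subtype.image_preimage_coe]
    exact ordConnected_Icc.inter (ordConnected_intervalPiece _ i)
  · refine eq_univ_of_forall fun x ↦ ?_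
    have hx : (x : ℝ) ∈ ⋃ i, Ici (cutPoint ℓ i) :=
      mem_iUnion.2 ⟨⟨0, (ℓ x).pos⟩, (cutPoint_eq_zero hℓ rfl).trans_le x.2.1⟩
    rw [← iUnion_intervalPiece] at hx
    obtain ⟨i, hi⟩ := mem_iUnion.1 hx
    exact mem_iUnion.2 ⟨i, hi⟩
  · rw [measure_symmDiff_eq_zero_iff]
    refine ae_eq_of_forall_ae_le ?_ hJ (fun i ↦ hψ.image_ae_le ?_) i
    · rw [← image_iUnion, hAcover, image_univ_of_surjective hψ.1.2]
    filter_upwards [hAℓ, hψf, ae_rearrange_mem_intervalPiece hℓ] with x hxℓ hψx hx hxi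
    rw [hψx, ← hAdisj.eq (not_disjoint_iff.2 ⟨x, hxℓ, hxi⟩)]
    exact hx

end
end

section
/- Let W be a graphon with values in [0,1] such that W(x,y) ∈ {0,1} for almost every (x,y) ∈ I², and let W₁, W₂, … be graphons with values in [0,1] such that δ_□(W_n, W) → 0 as n → ∞. Then δ₁(W_n, W) → 0 as n → ∞. -/
open MeasureTheory Set
open scoped symmDiff

noncomputable section

/-!
If `V` takes only the values `0` and `1` and `0 ≤ U ≤ 1`, then `|U - V| = (U - V) * (1 - 2V)`
pointwise, so `‖U - V‖₁` is the pairing of `U - V` with the bounded function `1 - 2V`. Pairing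
with a step function `∑ cᵢ 1_{Aᵢ × Bᵢ}` is bounded by `(∑ |cᵢ|) ‖U - V‖_□`, and finite unions
of rectangles are dense in measure, so `1 - 2W` has such an `L¹`-approximation with error `ε`.
Relabelling `W` by a measure preserving `φ` relabels the step function by the same `φ`, which
changes neither `∑ |cᵢ|` nor the error; hence `δ₁(Wₙ, W) ≤ (∑ |cᵢ|) δ_□(Wₙ, W) + ε`.
-/

open scoped Pointwise ENNReal

section Rectangles

variable {α β : Type*}

def rectSum {k : ℕ} (c : Fin k → ℝ) (A : Fin k → Set α) (B : Fin k → Set β) : α × β → ℝ :=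
  fun p => ∑ i, c i * (A i ×ˢ B i).indicator 1 p

lemma abs_rectSum_le {k : ℕ} (c : Fin k → ℝ) (A : Fin k → Set α) (B : Fin k → Set β)
    (p : α × β) : |rectSum c A B p| ≤ ∑ i, |c i| :=
  (Finset.abs_sum_le_sum_abs _ _).trans <| Finset.sum_le_sum fun i _ => by
    rw [abs_mul]
    by_cases hp : p ∈ A i ×ˢ B i <;> simp [hp]

variable [MeasurableSpace α] [MeasurableSpace β]

lemma measurable_rectSum {k : ℕ} (c : Fin k → ℝ) {A : Fin k → Set α} {B : Fin k → Set β}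
    (hA : ∀ i, MeasurableSet (A i)) (hB : ∀ i, MeasurableSet (B i)) :
    Measurable (rectSum c A B) :=
  Finset.measurable_sum _ fun i _ =>
    (measurable_const.indicator ((hA i).prod (hB i))).const_mul _

variable (α β) in
def rectIndicators : Set (α × β → ℝ) :=
  {f | ∃ (A : Set α) (B : Set β), MeasurableSet A ∧ MeasurableSet B ∧ f = (A ×ˢ B).indicator 1}

variable (α β) in
def rectSpan : Submodule ℝ (α × β → ℝ) := Submodule.span ℝ (rectIndicators α β)

lemma one_mem_rectSpan : (1 : α × β → ℝ) ∈ rectSpan α β :=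
  Submodule.subset_span ⟨_, _, .univ, .univ, by rw [Set.univ_prod_univ, Set.indicator_univ]⟩

lemma mul_mem_rectSpan {f g : α × β → ℝ} (hf : f ∈ rectSpan α β) (hg : g ∈ rectSpan α β) :
    f * g ∈ rectSpan α β := by
  have hmul : rectIndicators α β * rectIndicators α β ⊆ rectIndicators α β := by
    rintro _ ⟨_, ⟨A, B, hA, hB, rfl⟩, _, ⟨C, D, hC, hD, rfl⟩, rfl⟩
    refine ⟨A ∩ C, B ∩ D, hA.inter hC, hB.inter hD, ?_⟩
    rw [← Set.prod_inter_prod, Set.inter_indicator_one]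
  exact Submodule.span_mono hmul
    (Submodule.span_mul_span ℝ (rectIndicators α β) _ ▸ Submodule.mul_mem_mul hf hg)

lemma indicator_one_mem_rectSpan {s : Set (α × β)}
    (hs : s ∈ generateSetAlgebra
      (Set.image2 (· ×ˢ ·) {A : Set α | MeasurableSet A} {B : Set β | MeasurableSet B})) :
    s.indicator 1 ∈ rectSpan α β := by
  induction hs with
  | base s hs =>
    obtain ⟨A, hA, B, hB, rfl⟩ := hs
    exact Submodule.subset_span ⟨A, B, hA, hB, rfl⟩
  | empty => exact Set.indicator_empty (M := ℝ) _ ▸ zero_mem _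
  | compl s _ ih =>
    rw [Set.indicator_compl]
    exact sub_mem one_mem_rectSpan ih
  | union s t _ _ ihs iht =>
    have : (s ∪ t).indicator (1 : α × β → ℝ) =
        s.indicator 1 + t.indicator 1 - s.indicator 1 * t.indicator 1 := by
      rw [← Set.inter_indicator_one, ← Set.indicator_union_add_inter]
      ring
    rw [this]
    exact sub_mem (add_mem ihs iht) (mul_mem_rectSpan ihs iht)

lemma integrable_of_mem_rectSpan {μ : Measure (α × β)} [IsFiniteMeasure μ] {g : α × β → ℝ}
    (hg : g ∈ rectSpan α β) : Integrable g μ := by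
  induction hg using Submodule.span_induction with
  | mem f hf =>
    obtain ⟨A, B, hA, hB, rfl⟩ := hf
    exact (integrable_const 1).indicator (hA.prod hB)
  | zero => exact integrable_zero _ _ _
  | add _ _ _ _ hf hg => exact hf.add hg
  | smul a _ _ hf => exact hf.smul a

lemma exists_mem_rectSpan_eLpNorm_indicator_sub_le (μ : Measure (α × β)) [IsFiniteMeasure μ]
    (c : ℝ) {s : Set (α × β)} (hs : MeasurableSet s) {ε : ℝ≥0∞} (hε : ε ≠ 0) :
    ∃ g, eLpNorm (g - s.indicator fun _ => c) 1 μ ≤ ε ∧ g ∈ rectSpan α β := by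
  have hdense : μ.MeasureDense (generateSetAlgebra
      (image2 (· ×ˢ ·) {A : Set α | MeasurableSet A} {B : Set β | MeasurableSet B})) :=
    .of_generateFrom_isSetAlgebra_finite μ isSetAlgebra_generateSetAlgebra
      (by rw [generateFrom_generateSetAlgebra_eq, generateFrom_prod])
  obtain ⟨η, hη, hηε⟩ := ENNReal.exists_nnreal_pos_mul_lt enorm_ne_top hε (a := ‖c‖ₑ)
  obtain ⟨t, ht, hst⟩ := hdense.approx s hs (measure_ne_top μ s) η (mod_cast hη)
  refine ⟨t.indicator fun _ => c, ?_, ?_⟩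
  · calc eLpNorm (t.indicator (fun _ => c) - s.indicator fun _ => c) 1 μ
        = eLpNorm ((t ∆ s).indicator fun _ => c) 1 μ := eLpNorm_indicator_sub_indicator _ _ _
      _ ≤ ‖c‖ₑ * μ (s ∆ t) := by
        simpa [symmDiff_comm] using eLpNorm_indicator_const_le (μ := μ) (s := t ∆ s) (c := c) 1
      _ ≤ ε := by
        rw [mul_comm]
        refine le_trans (mul_le_mul_left (hst.le.trans ?_) _) hηε.le
        simp
  · rw [show (t.indicator fun _ => c) = c • t.indicator 1 by
      ext p; by_cases hp : p ∈ t <;> simp [hp]]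
    exact Submodule.smul_mem _ c (indicator_one_mem_rectSpan ht)

lemma exists_mem_rectSpan_integral_abs_sub_le {μ : Measure (α × β)} [IsFiniteMeasure μ]
    {f : α × β → ℝ} (hf : Integrable f μ) {ε : ℝ} (hε : 0 < ε) :
    ∃ g ∈ rectSpan α β, ∫ p, |f p - g p| ∂μ ≤ ε := by
  obtain ⟨g, hfg, hg⟩ := (memLp_one_iff_integrable.2 hf).induction_dense ENNReal.one_ne_top
    (· ∈ rectSpan α β) (fun c _ hs _ _ hε => exists_mem_rectSpan_eLpNorm_indicator_sub_le μ c hs hε)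
    (fun _ _ => add_mem) (fun _ hg => (integrable_of_mem_rectSpan hg).aestronglyMeasurable)
    (ENNReal.ofReal_pos.2 hε).ne'
  refine ⟨g, hg, ?_⟩
  have hfg_int : ∫ p, |f p - g p| ∂μ = (eLpNorm (f - g) 1 μ).toReal := by
    rw [eLpNorm_one_eq_lintegral_enorm, ← integral_norm_eq_lintegral_enorm
      (hf.sub (integrable_of_mem_rectSpan hg)).aestronglyMeasurable]
    rfl
  rw [hfg_int]
  exact ENNReal.toReal_le_of_le_ofReal hε.le hfg

lemma exists_rectSum_eq_of_mem_rectSpan {g : α × β → ℝ} (hg : g ∈ rectSpan α β) :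
    ∃ (k : ℕ) (c : Fin k → ℝ) (A : Fin k → Set α) (B : Fin k → Set β),
      (∀ i, MeasurableSet (A i)) ∧ (∀ i, MeasurableSet (B i)) ∧ g = rectSum c A B := by
  obtain ⟨k, c, v, rfl⟩ := Submodule.mem_span_set'.mp hg
  choose A B hA hB hv using fun i => (v i).2
  refine ⟨k, c, A, B, hA, hB, funext fun p => ?_⟩
  simp [rectSum, Finset.sum_apply, hv]

lemma exists_rectSum_integral_abs_sub_le {μ : Measure (α × β)} [IsFiniteMeasure μ]
    {f : α × β → ℝ} (hf : Integrable f μ) {ε : ℝ} (hε : 0 < ε) :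
    ∃ (k : ℕ) (c : Fin k → ℝ) (A : Fin k → Set α) (B : Fin k → Set β),
      (∀ i, MeasurableSet (A i)) ∧ (∀ i, MeasurableSet (B i)) ∧
      ∫ p, |f p - rectSum c A B p| ∂μ ≤ ε := by
  obtain ⟨g, hg, hfg⟩ := exists_mem_rectSpan_integral_abs_sub_le hf hε
  obtain ⟨k, c, A, B, hA, hB, rfl⟩ := exists_rectSum_eq_of_mem_rectSpan hg
  exact ⟨k, c, A, B, hA, hB, hfg⟩

end Rectangles

lemma abs_setIntegral_prod_le_cutNorm {f : I01 × I01 → ℝ} (hf : Integrable f)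
    {S T : Set I01} (hS : NullMeasurableSet S) (hT : NullMeasurableSet T) :
    |∫ p in S ×ˢ T, f p| ≤ cutNorm f := by
  refine le_csSup ⟨∫ p, |f p|, ?_⟩ ⟨S, T, hS, hT, rfl⟩
  rintro _ ⟨S', T', -, -, rfl⟩
  exact (abs_integral_le_integral_abs).trans
    (setIntegral_le_integral hf.abs (.of_forall fun p => abs_nonneg _))

lemma cutNorm_congr {f g : I01 × I01 → ℝ} (h : f =ᵐ[volume] g) : cutNorm f = cutNorm g := by
  have hrestrict : ∀ s : Set (I01 × I01), ∫ p in s, f p = ∫ p in s, g p :=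
    fun _ => integral_congr_ae (ae_restrict_of_ae h)
  simp only [cutNorm, hrestrict]

lemma abs_integral_mul_rectSum_le_cutNorm {f : I01 × I01 → ℝ} (hf : Integrable f)
    {k : ℕ} (c : Fin k → ℝ) {A B : Fin k → Set I01}
    (hA : ∀ i, MeasurableSet (A i)) (hB : ∀ i, MeasurableSet (B i)) :
    |∫ p, f p * rectSum c A B p| ≤ (∑ i, |c i|) * cutNorm f := by
  have hsum : (fun p => f p * rectSum c A B p) =
      fun p => ∑ i, c i * (A i ×ˢ B i).indicator f p := by
    ext p
    simp only [rectSum, Finset.mul_sum]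
    refine Finset.sum_congr rfl fun i _ => ?_
    by_cases hp : p ∈ A i ×ˢ B i <;> simp [hp, mul_comm]
  rw [hsum, integral_finsetSum _ fun i _ => (hf.indicator ((hA i).prod (hB i))).const_mul _,
    Finset.sum_mul]
  refine (Finset.abs_sum_le_sum_abs _ _).trans (Finset.sum_le_sum fun i _ => ?_)
  rw [integral_const_mul, abs_mul, integral_indicator ((hA i).prod (hB i))]
  gcongr
  exact abs_setIntegral_prod_le_cutNorm hf (hA i).nullMeasurableSet (hB i).nullMeasurableSet

lemma abs_sub_eq_mul_one_sub_two_mul {a b : ℝ} (ha : a ∈ Icc 0 1) (hb : b = 0 ∨ b = 1) :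
    |a - b| = (a - b) * (1 - 2 * b) := by
  rcases hb with rfl | rfl
  · simp [abs_of_nonneg ha.1]
  · rw [abs_of_nonpos (by linarith [ha.2])]
    ring

lemma integral_abs_sub_le_cutNorm_add {U V : I01 × I01 → ℝ}
    (hU : AEMeasurable U) (hV : AEMeasurable V)
    (hU01 : ∀ p, U p ∈ Icc 0 1) (hV01 : ∀ p, V p ∈ Icc 0 1)
    (hV01ae : ∀ᵐ p, V p = 0 ∨ V p = 1)
    {k : ℕ} (c : Fin k → ℝ) {A B : Fin k → Set I01}
    (hA : ∀ i, MeasurableSet (A i)) (hB : ∀ i, MeasurableSet (B i)) :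
    ∫ p, |U p - V p| ≤ (∑ i, |c i|) * cutNorm (fun p => U p - V p) +
      ∫ p, |1 - 2 * V p - rectSum c A B p| := by
  have hdiff_le : ∀ p, ‖U p - V p‖ ≤ 1 := fun p => abs_le.2
    ⟨by linarith [(hU01 p).1, (hV01 p).2], by linarith [(hU01 p).2, (hV01 p).1]⟩
  have hdiff : Integrable (fun p => U p - V p) :=
    .of_bound (hU.sub hV).aestronglyMeasurable 1 (.of_forall hdiff_le)
  have hdiff_meas := hdiff.aestronglyMeasurable
  have hV_int : Integrable V := .of_bound hV.aestronglyMeasurable 1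
    (.of_forall fun p => abs_le.2 ⟨by linarith [(hV01 p).1], (hV01 p).2⟩)
  have hg_meas := measurable_rectSum c hA hB
  have hG : Integrable fun p => 1 - 2 * V p - rectSum c A B p :=
    ((integrable_const 1).sub (hV_int.const_mul 2)).sub
      (.of_bound hg_meas.aestronglyMeasurable _ (.of_forall (abs_rectSum_le c A B)))
  calc ∫ p, |U p - V p|
      = ∫ p, (U p - V p) * (1 - 2 * V p) := integral_congr_ae <| by
        filter_upwards [hV01ae] with p hp using abs_sub_eq_mul_one_sub_two_mul (hU01 p) hp
    _ = (∫ p, (U p - V p) * rectSum c A B p) +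
          ∫ p, (U p - V p) * (1 - 2 * V p - rectSum c A B p) := by
        rw [← integral_add (hdiff.mul_bdd hg_meas.aestronglyMeasurable
          (.of_forall (abs_rectSum_le c A B))) (hG.bdd_mul hdiff_meas (.of_forall hdiff_le))]
        congr! 2 with p
        ring
    _ ≤ (∑ i, |c i|) * cutNorm (fun p => U p - V p) + ∫ p, |1 - 2 * V p - rectSum c A B p| := by
        refine add_le_add ?_ ?_
        · exact (le_abs_self _).trans (abs_integral_mul_rectSum_le_cutNorm hdiff c hA hB)
        · refine integral_mono (hG.bdd_mul hdiff_meas (.of_forall hdiff_le)) hG.abs fun p => ?_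
          refine (le_abs_self _).trans ?_
          rw [abs_mul]
          exact mul_le_of_le_one_left (abs_nonneg _) (hdiff_le p)

lemma MeasureTheory.MeasurePreserving.integral_comp_prodMap {α : Type*} [MeasureSpace α]
    [SFinite (volume : Measure α)] {ψ : α → α} (hψ : MeasurePreserving ψ)
    {F : α × α → ℝ} (hF : AEStronglyMeasurable F) :
    ∫ p : α × α, F (ψ p.1, ψ p.2) = ∫ p, F p := by
  have hΨ : MeasurePreserving (Prod.map ψ ψ) (volume : Measure (α × α)) volume := hψ.prod hψ
  have h := integral_map hΨ.measurable.aemeasurable (hΨ.map_eq ▸ hF)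
  rw [hΨ.map_eq] at h
  exact h.symm

lemma MPhi.exists_measurePreserving_ae_eq {φ : I01 → I01} (hφ : MPhi φ) :
    ∃ ψ, MeasurePreserving ψ ∧ φ =ᵐ[volume] ψ := by
  refine ⟨hφ.1.mk φ, ⟨hφ.1.measurable_mk, Measure.ext fun A hA => ?_⟩, hφ.1.ae_eq_mk⟩
  rw [Measure.map_apply hφ.1.measurable_mk hA,
    ← measure_congr (hφ.1.ae_eq_mk.preimage A), hφ.2 A hA.nullMeasurableSet]

lemma compMap_ae_eq_of_ae_eq (W : I01 × I01 → ℝ) {φ ψ : I01 → I01} (h : φ =ᵐ[volume] ψ) :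
    compMap W φ =ᵐ[volume] compMap W ψ := by
  have h₁ : ∀ᵐ p : I01 × I01, φ p.1 = ψ p.1 := Measure.quasiMeasurePreserving_fst.ae h
  have h₂ : ∀ᵐ p : I01 × I01, φ p.2 = ψ p.2 := Measure.quasiMeasurePreserving_snd.ae h
  filter_upwards [h₁, h₂] with p hp₁ hp₂
  simp [compMap, hp₁, hp₂]

lemma mPhi0_id : MPhi0 (id : I01 → I01) := by
  have hid : MPhi (id : I01 → I01) := ⟨aemeasurable_id, fun _ _ => rfl⟩
  refine ⟨Function.bijective_id, hid, ?_⟩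
  rwa [show Function.invFun (id : I01 → I01) = id from
    funext (Function.leftInverse_invFun Function.injective_id)]

lemma gDelta1_nonneg (U W : I01 × I01 → ℝ) : 0 ≤ gDelta1 U W :=
  Real.sInf_nonneg <| by
    rintro _ ⟨φ, -, rfl⟩
    exact integral_nonneg fun p => abs_nonneg _

lemma gDelta1_le_of_gDeltaBox_lt {U W : I01 × I01 → ℝ} (hU : AEMeasurable U)
    (hU01 : ∀ p, U p ∈ Icc 0 1) (hW : AEMeasurable W) (hW01 : ∀ p, W p ∈ Icc 0 1)
    (hW01ae : ∀ᵐ p, W p = 0 ∨ W p = 1)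
    {k : ℕ} (c : Fin k → ℝ) {A B : Fin k → Set I01}
    (hA : ∀ i, MeasurableSet (A i)) (hB : ∀ i, MeasurableSet (B i))
    {δ : ℝ} (hδ : gDeltaBox U W < δ) :
    gDelta1 U W ≤ (∑ i, |c i|) * δ + ∫ p, |1 - 2 * W p - rectSum c A B p| := by
  obtain ⟨_, ⟨φ, hφ, rfl⟩, hφδ⟩ := exists_lt_of_csInf_lt (by exact ⟨_, id, mPhi0_id, rfl⟩) hδ
  obtain ⟨ψ, hψ, hφψ⟩ := hφ.2.1.exists_measurePreserving_ae_eq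
  have hΨ : Measure.QuasiMeasurePreserving (Prod.map ψ ψ) (volume : Measure (I01 × I01)) volume :=
    (hψ.prod hψ).quasiMeasurePreserving
  have hdiff : (fun p => U p - compMap W φ p) =ᵐ[volume] fun p => U p - compMap W ψ p := by
    filter_upwards [compMap_ae_eq_of_ae_eq W hφψ] with p hp
    rw [hp]
  calc gDelta1 U W ≤ l1Norm fun p => U p - compMap W φ p :=
        csInf_le ⟨0, by rintro _ ⟨_, _, rfl⟩; exact integral_nonneg fun _ => abs_nonneg _⟩
          ⟨φ, hφ, rfl⟩
    _ = ∫ p, |U p - compMap W ψ p| := integral_congr_ae (hdiff.fun_comp abs)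
    _ ≤ (∑ i, |c i|) * cutNorm (fun p => U p - compMap W ψ p) +
          ∫ p, |1 - 2 * compMap W ψ p - rectSum c (fun i => ψ ⁻¹' A i) (fun i => ψ ⁻¹' B i) p| :=
        integral_abs_sub_le_cutNorm_add hU (hW.comp_quasiMeasurePreserving hΨ) hU01
          (fun p => hW01 _) (hΨ.ae hW01ae) c (fun i => hψ.measurable (hA i))
          (fun i => hψ.measurable (hB i))
    _ = (∑ i, |c i|) * cutNorm (fun p => U p - compMap W φ p) +
          ∫ p, |1 - 2 * W p - rectSum c A B p| := by
        rw [cutNorm_congr hdiff]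
        congr 1
        -- `rectSum c (ψ ⁻¹' A) (ψ ⁻¹' B)` is definitionally `rectSum c A B ∘ Prod.map ψ ψ`
        exact hψ.integral_comp_prodMap <| continuous_abs.comp_aestronglyMeasurable
          ((aemeasurable_const.sub (hW.const_mul 2)).sub
            (measurable_rectSum c hA hB).aemeasurable).aestronglyMeasurable
    _ ≤ (∑ i, |c i|) * δ + ∫ p, |1 - 2 * W p - rectSum c A B p| := by
        gcongr

/-- If `W` is `{0,1}`-valued a.e., then convergence to `W` in cut distance implies
convergence in `δ₁`. -/
theorem tendsto_gDelta1_of_tendsto_gDeltaBox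
    (W : I01 × I01 → ℝ) (hW : IsGraphon W) (hW01 : ∀ p, W p ∈ Set.Icc (0 : ℝ) 1)
    (hW01ae : ∀ᵐ p ∂(volume : Measure (I01 × I01)), W p = 0 ∨ W p = 1)
    (Wseq : ℕ → I01 × I01 → ℝ) (hWseq : ∀ n, IsGraphon (Wseq n))
    (hWseq01 : ∀ n p, Wseq n p ∈ Set.Icc (0 : ℝ) 1)
    (hbox : Filter.Tendsto (fun n => gDeltaBox (Wseq n) W) Filter.atTop (nhds 0)) :
    Filter.Tendsto (fun n => gDelta1 (Wseq n) W) Filter.atTop (nhds 0) := by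
  obtain ⟨-, -, hWm⟩ := hW
  have hG : Integrable fun p => 1 - 2 * W p :=
    (integrable_const 1).sub ((Integrable.of_bound hWm.aestronglyMeasurable 1
      (.of_forall fun p => abs_le.2 ⟨by linarith [(hW01 p).1], (hW01 p).2⟩)).const_mul 2)
  refine tendsto_order.2 ⟨fun a ha => .of_forall fun n => ha.trans_le (gDelta1_nonneg _ _),
    fun ε hε => ?_⟩
  obtain ⟨k, c, A, B, hA, hB, hGc⟩ := exists_rectSum_integral_abs_sub_le hG (half_pos hε)
  have hK : 0 ≤ ∑ i, |c i| := Finset.sum_nonneg fun i _ => abs_nonneg (c i)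
  have hδ : 0 < ε / 2 / (∑ i, |c i| + 1) := by positivity
  filter_upwards [hbox.eventually (gt_mem_nhds hδ)] with n hn
  calc gDelta1 (Wseq n) W
      ≤ (∑ i, |c i|) * (ε / 2 / (∑ i, |c i| + 1)) + ∫ p, |1 - 2 * W p - rectSum c A B p| :=
        gDelta1_le_of_gDeltaBox_lt (hWseq n).2.2 (hWseq01 n) hWm hW01 hW01ae c hA hB hn
    _ < ε / 2 + ε / 2 := by
        refine add_lt_add_of_lt_of_le ?_ hGc
        rw [mul_div_assoc', div_lt_iff₀ (by positivity)]
        nlinarith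
    _ = ε := add_halves ε

end
end
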